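/- arXiv:2111.03237 — 4 statements merged into one kernel-verified Lean document; each statement's English description precedes it below -/
import Mathlib

section
/- Let λ be a random variable with a ≤ λ ≤ b almost surely for some 0 < a ≤ b < ∞ and E[λ] = δ, where δ > 1. Define M(u) := (1/δ)·E[u·λ/(u+λ)] and Φ(u) := M(u)·u/(u − M(u)) for u > 0. Then 0 < M(u) < u for every u > 0 (so Φ is well defined and positive), Φ is continuous and strictly increasing on (0, ∞), lim_{u→0⁺} Φ(u) = 0, and lim_{u→∞} Φ(u) = 1. -/
/-!
Write `u ∥ x := u * x / (u + x) = (u⁻¹ + x⁻¹)⁻¹` (`parallel u x`) and `I u := E[u ∥ λ]`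
(`meanParallel`), so that `M = I / δ` and `Φ = (M⁻¹ - u⁻¹)⁻¹`. Since `u ∥ λ ≤ u`,
`M u ≤ u / δ < u`. For `u < v` one has `u v (I v - I u) = (v - u) E[(u ∥ λ) (v ∥ λ)]`, and
since both factors increase with `λ`, Chebyshev's correlation inequality gives `E[(u ∥ λ) (v ∥ λ)] ≥ I u I v`; with `δ > 1` this makes
`M⁻¹ - u⁻¹ = δ / I u - 1 / u` strictly decreasing, so `Φ` is strictly increasing. The bound
`M⁻¹ - u⁻¹ ≥ (δ - 1) / u` gives `Φ → 0` at `0⁺`, and dominated convergence (`u ∥ λ ≤ λ`,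
`u ∥ λ → λ`) gives `M → 1`, hence `Φ → 1`, at infinity.
-/

open MeasureTheory Filter Set Topology

section

variable {Ω : Type*} [MeasurableSpace Ω] {μ : Measure Ω}

theorem integral_pos_of_ae_pos [NeZero μ] {f : Ω → ℝ} (hf : ∀ᵐ ω ∂μ, 0 < f ω)
    (hfi : Integrable f μ) : 0 < ∫ ω, f ω ∂μ := by
  refine (integral_nonneg_of_ae (hf.mono fun _ h ↦ h.le)).lt_of_ne' fun h0 ↦ ?_
  have hzero := (integral_eq_zero_iff_of_nonneg_ae (hf.mono fun _ h ↦ h.le) hfi).1 h0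
  obtain ⟨ω, hω, hω0⟩ := (hf.and hzero).exists
  exact hω.ne' hω0

theorem MonovaryOn.integral_mul_integral_le_integral_mul [IsProbabilityMeasure μ]
    {X Y : Ω → ℝ} {s : Set Ω} (h : MonovaryOn X Y s) (hs : ∀ᵐ ω ∂μ, ω ∈ s)
    (hX : Integrable X μ) (hY : Integrable Y μ) (hXY : Integrable (fun ω ↦ X ω * Y ω) μ) :
    (∫ ω, X ω ∂μ) * (∫ ω, Y ω ∂μ) ≤ ∫ ω, X ω * Y ω ∂μ := by
  have hs₂ : ∀ᵐ p ∂μ.prod μ, p.1 ∈ s ∧ p.2 ∈ s :=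
    (Measure.quasiMeasurePreserving_fst.ae hs).and (Measure.quasiMeasurePreserving_snd.ae hs)
  have hnonneg : 0 ≤ ∫ p, (X p.2 - X p.1) * (Y p.2 - Y p.1) ∂μ.prod μ :=
    integral_nonneg_of_ae (hs₂.mono fun p hp ↦ h.sub_mul_sub_nonneg hp.1 hp.2)
  have hexpand : ∫ p, (X p.2 - X p.1) * (Y p.2 - Y p.1) ∂μ.prod μ
      = 2 * ∫ ω, X ω * Y ω ∂μ - 2 * ((∫ ω, X ω ∂μ) * ∫ ω, Y ω ∂μ) := by
    have hXY₁ : Integrable (fun p : Ω × Ω ↦ X p.1 * Y p.1) (μ.prod μ) := hXY.comp_fst μ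
    have hXY₂ : Integrable (fun p : Ω × Ω ↦ X p.2 * Y p.2) (μ.prod μ) := hXY.comp_snd μ
    have hXY₁₂ : Integrable (fun p : Ω × Ω ↦ X p.1 * Y p.2) (μ.prod μ) := hX.mul_prod hY
    have hYX₁₂ : Integrable (fun p : Ω × Ω ↦ Y p.1 * X p.2) (μ.prod μ) := hY.mul_prod hX
    calc ∫ p, (X p.2 - X p.1) * (Y p.2 - Y p.1) ∂μ.prod μ
        = ∫ p, (X p.1 * Y p.1 + X p.2 * Y p.2 - (X p.1 * Y p.2 + Y p.1 * X p.2)) ∂μ.prod μ := by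
          congr 1 with p; ring
      _ = _ := by
          rw [integral_sub (hXY₁.fun_add hXY₂) (hXY₁₂.fun_add hYX₁₂), integral_add hXY₁ hXY₂,
            integral_add hXY₁₂ hYX₁₂, integral_fun_fst (fun ω ↦ X ω * Y ω),
            integral_fun_snd (fun ω ↦ X ω * Y ω), integral_prod_mul X Y, integral_prod_mul Y X]
          simp only [probReal_univ, one_smul]
          ring
  linarith

namespace StateEvolution

variable {lam : Ω → ℝ} {u v x δ : ℝ}

noncomputable def parallel (u x : ℝ) : ℝ := u * x / (u + x)

theorem parallel_pos (hu : 0 < u) (hx : 0 < x) : 0 < parallel u x := by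
  unfold parallel; positivity

theorem parallel_nonneg (hu : 0 ≤ u) (hx : 0 < x) : 0 ≤ parallel u x := by
  unfold parallel; positivity

theorem parallel_le_left (hu : 0 ≤ u) (hx : 0 < x) : parallel u x ≤ u := by
  unfold parallel
  rw [div_le_iff₀ (by positivity)]
  nlinarith

theorem parallel_le_right (hu : 0 ≤ u) (hx : 0 < x) : parallel u x ≤ x := by
  unfold parallel
  rw [div_le_iff₀ (by positivity)]
  nlinarith

theorem norm_parallel_le_left (hu : 0 ≤ u) (hx : 0 < x) : ‖parallel u x‖ ≤ u := by
  rw [Real.norm_of_nonneg (parallel_nonneg hu hx)]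
  exact parallel_le_left hu hx

theorem norm_parallel_le_right (hu : 0 ≤ u) (hx : 0 < x) : ‖parallel u x‖ ≤ x := by
  rw [Real.norm_of_nonneg (parallel_nonneg hu hx)]
  exact parallel_le_right hu hx

theorem monotoneOn_parallel (hu : 0 ≤ u) : MonotoneOn (parallel u) (Ioi 0) := by
  intro x (hx : 0 < x) y (hy : 0 < y) hxy
  unfold parallel
  rw [div_le_div_iff₀ (by positivity) (by positivity)]
  nlinarith [mul_nonneg (mul_nonneg hu hu) (sub_nonneg.2 hxy)]

theorem mul_mul_parallel_sub (hu : 0 ≤ u) (hv : 0 ≤ v) (hx : 0 < x) :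
    u * v * (parallel v x - parallel u x) = (v - u) * (parallel u x * parallel v x) := by
  have : u + x ≠ 0 := by positivity
  have : v + x ≠ 0 := by positivity
  unfold parallel
  field_simp
  ring

theorem tendsto_parallel_atTop (x : ℝ) : Tendsto (parallel · x) atTop (𝓝 x) := by
  have hsub : Tendsto (fun u ↦ x - x ^ 2 / (u + x)) atTop (𝓝 (x - 0)) :=
    tendsto_const_nhds.sub <|
      tendsto_const_nhds.div_atTop (tendsto_atTop_add_const_right _ _ tendsto_id)
  refine (sub_zero x ▸ hsub).congr' ?_
  filter_upwards [eventually_gt_atTop (-x)] with u hu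
  have : u + x ≠ 0 := by linarith
  unfold parallel
  field_simp
  ring

theorem aestronglyMeasurable_parallel (hlam : AEMeasurable lam μ) (u : ℝ) :
    AEStronglyMeasurable (fun ω ↦ parallel u (lam ω)) μ :=
  ((by unfold parallel; fun_prop : Measurable (parallel u)).comp_aemeasurable
    hlam).aestronglyMeasurable

theorem integrable_parallel [IsFiniteMeasure μ] (hlam : AEMeasurable lam μ)
    (hpos : ∀ᵐ ω ∂μ, 0 < lam ω) (hu : 0 ≤ u) : Integrable (fun ω ↦ parallel u (lam ω)) μ :=
  .of_bound (aestronglyMeasurable_parallel hlam u) u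
    (hpos.mono fun _ hω ↦ norm_parallel_le_left hu hω)

noncomputable def meanParallel (μ : Measure Ω) (lam : Ω → ℝ) (u : ℝ) : ℝ :=
  ∫ ω, parallel u (lam ω) ∂μ

theorem continuousOn_meanParallel (hlam : Integrable lam μ) (hpos : ∀ᵐ ω ∂μ, 0 < lam ω) :
    ContinuousOn (meanParallel μ lam) (Ioi 0) := by
  refine continuousOn_of_dominated (fun u _ ↦ aestronglyMeasurable_parallel hlam.aemeasurable u)
    (fun u hu ↦ hpos.mono fun _ hω ↦ norm_parallel_le_right (le_of_lt hu) hω) hlam ?_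
  filter_upwards [hpos] with ω hω
  intro u (hu : 0 < u)
  have : u + lam ω ≠ 0 := by positivity
  unfold parallel
  fun_prop (disch := assumption)

theorem tendsto_meanParallel_atTop (hlam : Integrable lam μ) (hpos : ∀ᵐ ω ∂μ, 0 < lam ω) :
    Tendsto (meanParallel μ lam) atTop (𝓝 (∫ ω, lam ω ∂μ)) := by
  refine tendsto_integral_filter_of_dominated_convergence lam
    (.of_forall fun u ↦ aestronglyMeasurable_parallel hlam.aemeasurable u) ?_ hlam
    (ae_of_all _ fun ω ↦ tendsto_parallel_atTop (lam ω))
  filter_upwards [eventually_ge_atTop 0] with u hu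
  exact hpos.mono fun _ hω ↦ norm_parallel_le_right hu hω

theorem mul_mul_meanParallel_sub [IsFiniteMeasure μ] (hlam : AEMeasurable lam μ)
    (hpos : ∀ᵐ ω ∂μ, 0 < lam ω) (hu : 0 ≤ u) (hv : 0 ≤ v) :
    u * v * (meanParallel μ lam v - meanParallel μ lam u)
      = (v - u) * ∫ ω, parallel u (lam ω) * parallel v (lam ω) ∂μ := by
  rw [meanParallel, meanParallel, ← integral_sub (integrable_parallel hlam hpos hv)
    (integrable_parallel hlam hpos hu), ← integral_const_mul, ← integral_const_mul]
  exact integral_congr_ae (hpos.mono fun _ hω ↦ mul_mul_parallel_sub hu hv hω)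

noncomputable def M (μ : Measure Ω) (lam : Ω → ℝ) (δ u : ℝ) : ℝ := (1 / δ) * meanParallel μ lam u

noncomputable def Φ (μ : Measure Ω) (lam : Ω → ℝ) (δ u : ℝ) : ℝ :=
  M μ lam δ u * u / (u - M μ lam δ u)

theorem Φ_eq_inv_sub_inv (hM : M μ lam δ u ≠ 0) (hu : u ≠ 0) :
    Φ μ lam δ u = ((M μ lam δ u)⁻¹ - u⁻¹)⁻¹ := by
  rw [Φ, inv_sub_inv hM hu, inv_div]

section ProbabilityMeasure

variable [IsProbabilityMeasure μ]

theorem meanParallel_pos (hlam : AEMeasurable lam μ) (hpos : ∀ᵐ ω ∂μ, 0 < lam ω) (hu : 0 < u) :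
    0 < meanParallel μ lam u :=
  integral_pos_of_ae_pos (hpos.mono fun _ hω ↦ parallel_pos hu hω)
    (integrable_parallel hlam hpos hu.le)

theorem meanParallel_le (hpos : ∀ᵐ ω ∂μ, 0 < lam ω) (hu : 0 ≤ u) : meanParallel μ lam u ≤ u := by
  have := integral_mono_of_nonneg (hpos.mono fun _ hω ↦ parallel_nonneg hu hω)
    (integrable_const u) (hpos.mono fun _ hω ↦ parallel_le_left hu hω)
  simpa [meanParallel] using this

theorem meanParallel_mul_le (hlam : AEMeasurable lam μ) (hpos : ∀ᵐ ω ∂μ, 0 < lam ω)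
    (hu : 0 ≤ u) (hv : 0 ≤ v) :
    meanParallel μ lam u * meanParallel μ lam v
      ≤ ∫ ω, parallel u (lam ω) * parallel v (lam ω) ∂μ :=
  (((monotoneOn_parallel hu).monovaryOn (monotoneOn_parallel hv)).comp_right lam
    ).integral_mul_integral_le_integral_mul hpos (integrable_parallel hlam hpos hu)
    (integrable_parallel hlam hpos hv)
    ((integrable_parallel hlam hpos hv).bdd_mul (aestronglyMeasurable_parallel hlam u)
      (hpos.mono fun _ hω ↦ norm_parallel_le_left hu hω))

theorem M_pos (hlam : AEMeasurable lam μ) (hpos : ∀ᵐ ω ∂μ, 0 < lam ω) (hδ : 0 < δ) (hu : 0 < u) :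
    0 < M μ lam δ u :=
  mul_pos (one_div_pos.2 hδ) (meanParallel_pos hlam hpos hu)

theorem M_le_div (hpos : ∀ᵐ ω ∂μ, 0 < lam ω) (hδ : 0 < δ) (hu : 0 ≤ u) :
    M μ lam δ u ≤ u / δ := by
  rw [M, one_div_mul_eq_div]
  exact div_le_div_of_nonneg_right (meanParallel_le hpos hu) hδ.le

theorem M_lt_self (hpos : ∀ᵐ ω ∂μ, 0 < lam ω) (hδ : 1 < δ) (hu : 0 < u) : M μ lam δ u < u :=
  (M_le_div hpos (zero_lt_one.trans hδ) hu.le).trans_lt (div_lt_self hu hδ)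

theorem inv_M_sub_inv_pos (hlam : AEMeasurable lam μ) (hpos : ∀ᵐ ω ∂μ, 0 < lam ω) (hδ : 1 < δ)
    (hu : 0 < u) : 0 < (M μ lam δ u)⁻¹ - u⁻¹ :=
  sub_pos.2 <| inv_strictAnti₀ (M_pos hlam hpos (zero_lt_one.trans hδ) hu) (M_lt_self hpos hδ hu)

theorem strictAntiOn_inv_M_sub_inv (hlam : AEMeasurable lam μ) (hpos : ∀ᵐ ω ∂μ, 0 < lam ω)
    (hδ : 1 < δ) : StrictAntiOn (fun u ↦ (M μ lam δ u)⁻¹ - u⁻¹) (Ioi 0) := by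
  intro u (hu : 0 < u) v (hv : 0 < v) huv
  have hIu := meanParallel_pos hlam hpos hu
  have hIv := meanParallel_pos hlam hpos hv
  have key : (v - u) * (meanParallel μ lam u * meanParallel μ lam v)
      < δ * (u * v * (meanParallel μ lam v - meanParallel μ lam u)) := by
    rw [mul_mul_meanParallel_sub hlam hpos hu.le hv.le]
    nlinarith [meanParallel_mul_le hlam hpos hu.le hv.le, mul_pos hIu hIv,
      mul_pos (sub_pos.2 huv) (sub_pos.2 hδ)]
  simp only [M, one_div, mul_inv, inv_inv]
  rw [← sub_pos]
  convert div_pos (sub_pos.2 key) (mul_pos (mul_pos hu hv) (mul_pos hIu hIv)) using 1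
  field_simp
  ring

theorem continuousOn_Φ (hlam : Integrable lam μ) (hpos : ∀ᵐ ω ∂μ, 0 < lam ω) (hδ : 1 < δ) :
    ContinuousOn (Φ μ lam δ) (Ioi 0) := by
  have hM : ContinuousOn (M μ lam δ) (Ioi 0) :=
    continuousOn_const.mul (continuousOn_meanParallel hlam hpos)
  exact (hM.mul continuousOn_id).div (continuousOn_id.sub hM)
    fun u hu ↦ (sub_pos.2 (M_lt_self hpos hδ hu)).ne'

theorem strictMonoOn_Φ (hlam : AEMeasurable lam μ) (hpos : ∀ᵐ ω ∂μ, 0 < lam ω) (hδ : 1 < δ) :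
    StrictMonoOn (Φ μ lam δ) (Ioi 0) := by
  intro u (hu : 0 < u) v (hv : 0 < v) huv
  have hδ₀ : 0 < δ := zero_lt_one.trans hδ
  rw [Φ_eq_inv_sub_inv (M_pos hlam hpos hδ₀ hu).ne' hu.ne',
    Φ_eq_inv_sub_inv (M_pos hlam hpos hδ₀ hv).ne' hv.ne']
  exact inv_strictAnti₀ (inv_M_sub_inv_pos hlam hpos hδ hv)
    (strictAntiOn_inv_M_sub_inv hlam hpos hδ hu hv huv)

theorem tendsto_Φ_nhdsGT_zero (hlam : AEMeasurable lam μ) (hpos : ∀ᵐ ω ∂μ, 0 < lam ω)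
    (hδ : 1 < δ) : Tendsto (Φ μ lam δ) (𝓝[>] 0) (𝓝 0) := by
  have hδ₀ : 0 < δ := zero_lt_one.trans hδ
  have hK : Tendsto (fun u ↦ (M μ lam δ u)⁻¹ - u⁻¹) (𝓝[>] 0) atTop := by
    refine tendsto_atTop_mono' _ ?_ (tendsto_inv_nhdsGT_zero.const_mul_atTop (sub_pos.2 hδ))
    filter_upwards [self_mem_nhdsWithin] with u (hu : 0 < u)
    have : δ * u⁻¹ ≤ (M μ lam δ u)⁻¹ := by
      simpa [inv_div, div_eq_mul_inv] using
        inv_anti₀ (M_pos hlam hpos hδ₀ hu) (M_le_div hpos hδ₀ hu.le)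
    linarith
  refine hK.inv_tendsto_atTop.congr' ?_
  filter_upwards [self_mem_nhdsWithin] with u (hu : 0 < u)
  exact (Φ_eq_inv_sub_inv (M_pos hlam hpos hδ₀ hu).ne' hu.ne').symm

theorem tendsto_Φ_atTop (hlam : Integrable lam μ) (hpos : ∀ᵐ ω ∂μ, 0 < lam ω)
    (hmean : ∫ ω, lam ω ∂μ = δ) (hδ : 0 < δ) : Tendsto (Φ μ lam δ) atTop (𝓝 1) := by
  have hM : Tendsto (M μ lam δ) atTop (𝓝 1) := by
    have := (tendsto_meanParallel_atTop hlam hpos).const_mul (1 / δ)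
    rwa [hmean, one_div_mul_cancel hδ.ne'] at this
  have hK := (hM.inv₀ one_ne_zero).sub tendsto_inv_atTop_zero
  rw [inv_one, sub_zero] at hK
  have hΦ := hK.inv₀ one_ne_zero
  rw [inv_one] at hΦ
  refine hΦ.congr' ?_
  filter_upwards [eventually_gt_atTop 0] with u hu
  exact (Φ_eq_inv_sub_inv (M_pos hlam.aemeasurable hpos hδ hu).ne' hu.ne').symm

end ProbabilityMeasure

end StateEvolution

end

theorem SE_map_Phi_properties_general {Ω : Type*} [MeasurableSpace Ω] {μ : Measure Ω}
    [IsProbabilityMeasure μ]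
    (lam : Ω → ℝ)
    (a b δ : ℝ) (ha : 0 < a)
    (hbound : ∀ᵐ ω ∂μ, lam ω ∈ Set.Icc a b)
    (hmean : ∫ ω, lam ω ∂μ = δ) (hδ : 1 < δ) :
    let M : ℝ → ℝ := fun u => (1 / δ) * ∫ ω, u * lam ω / (u + lam ω) ∂μ
    let Φ : ℝ → ℝ := fun u => M u * u / (u - M u)
    (∀ u : ℝ, 0 < u → 0 < M u ∧ M u < u) ∧
      ContinuousOn Φ (Set.Ioi 0) ∧
      StrictMonoOn Φ (Set.Ioi 0) ∧
      Tendsto Φ (nhdsWithin 0 (Set.Ioi 0)) (nhds 0) ∧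
      Tendsto Φ atTop (nhds 1) := by
  intro M Φ
  -- A non-integrable `λ` would have `∫ λ = 0 ≠ δ`.
  have hint : Integrable lam μ := by
    by_contra h
    rw [integral_undef h] at hmean
    linarith
  have hpos : ∀ᵐ ω ∂μ, 0 < lam ω := hbound.mono fun _ hω ↦ ha.trans_le hω.1
  have hδ₀ : 0 < δ := zero_lt_one.trans hδ
  exact ⟨fun u hu ↦ ⟨StateEvolution.M_pos hint.aemeasurable hpos hδ₀ hu,
      StateEvolution.M_lt_self hpos hδ hu⟩,
    StateEvolution.continuousOn_Φ hint hpos hδ,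
    StateEvolution.strictMonoOn_Φ hint.aemeasurable hpos hδ,
    StateEvolution.tendsto_Φ_nhdsGT_zero hint.aemeasurable hpos hδ,
    StateEvolution.tendsto_Φ_atTop hint hpos hmean hδ₀⟩

/-- properties of the state-evolution map `Φ` built from a bounded spectrum
random variable `λ` with mean `δ > 1`:  `0 < M(u) < u` for all `u > 0`, `Φ` is continuous
and strictly increasing on `(0, ∞)`, `Φ(u) → 0` as `u → 0⁺`, and `Φ(u) → 1` as `u → ∞`. -/
theorem SE_map_Phi_properties {Ω : Type*} [MeasurableSpace Ω] {μ : Measure Ω}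
    [IsProbabilityMeasure μ]
    (lam : Ω → ℝ) (hlam : Measurable lam)
    (a b δ : ℝ) (ha : 0 < a) (hab : a ≤ b)
    (hbound : ∀ᵐ ω ∂μ, lam ω ∈ Set.Icc a b)
    (hmean : ∫ ω, lam ω ∂μ = δ) (hδ : 1 < δ) :
    let M : ℝ → ℝ := fun u => (1 / δ) * ∫ ω, u * lam ω / (u + lam ω) ∂μ
    let Φ : ℝ → ℝ := fun u => M u * u / (u - M u)
    (∀ u : ℝ, 0 < u → 0 < M u ∧ M u < u) ∧
      ContinuousOn Φ (Set.Ioi 0) ∧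
      StrictMonoOn Φ (Set.Ioi 0) ∧
      Tendsto Φ (nhdsWithin 0 (Set.Ioi 0)) (nhds 0) ∧
      Tendsto Φ atTop (nhds 1) :=
  SE_map_Phi_properties_general lam a b δ ha hbound hmean hδ
end

section
/- Let φ₁(x) := (2π)^{−1/2}·exp(−x²/2) be the standard Gaussian density and Φ₁(x) := ∫_{−∞}^{x} φ₁(t) dt the standard Gaussian distribution function. Then for every x ∈ ℝ, |(d/dx)(φ₁(x)/Φ₁(x))| ≤ 1; consequently, φ₁(x)/Φ₁(x) ≤ √(2/π) + |x| for every x ∈ ℝ. -/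
/-! Write `R = φ / Φ`. From `φ' = -x φ` and `Φ' = φ` one gets `R' = -R (x + R)`, and both
factors are truncated moments of the Gaussian on `(-∞, x]`:
`Φ (x + R) = ∫ (x - t) φ(t) dt ≥ 0` and `Φ (1 - R (x + R)) = ∫ (t + R)² φ(t) dt ≥ 0`, the latter
being `Φ` times the variance of the truncated law, whose mean is `-R`. Hence `0 ≤ -R' ≤ 1`, so `R`
is `1`-Lipschitz, and `R 0 = φ 0 / (1 / 2) = √(2 / π)`. -/

open MeasureTheory Filter Set Real ProbabilityTheory Topology

section Calculus

variable {E : Type*} [NormedAddCommGroup E] [NormedSpace ℝ E] [CompleteSpace E]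

theorem integral_Iic_of_hasDerivAt_of_integrable {f f' : ℝ → E}
    (hderiv : ∀ t, HasDerivAt f (f' t) t) (hf : Integrable f) (hf' : Integrable f') (x : ℝ) :
    ∫ t in Iic x, f' t = f x := by
  have hlim : Tendsto f atBot (𝓝 0) :=
    tendsto_zero_of_hasDerivAt_of_integrableOn_Iic (a := 0) (fun t _ => hderiv t)
      hf'.integrableOn hf.integrableOn
  simpa using integral_Iic_of_hasDerivAt_of_tendsto' (fun t _ => hderiv t) hf'.integrableOn hlim

theorem hasDerivAt_integral_Iic {f : ℝ → E} (hf : Integrable f) (hc : Continuous f) (x : ℝ) :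
    HasDerivAt (fun u => ∫ t in Iic u, f t) (f x) x := by
  have hsplit : (fun u => ∫ t in Iic u, f t) = fun u => (∫ t in Iic 0, f t) + ∫ t in 0..u, f t := by
    funext u
    rw [intervalIntegral.integral_Iic_sub_Iic hf.integrableOn hf.integrableOn |>.symm]
    abel
  rw [hsplit]
  exact (intervalIntegral.integral_hasDerivAt_right hf.intervalIntegrable
    (hc.stronglyMeasurableAtFilter _ _) hc.continuousAt).const_add _

theorem integral_Iic_zero_of_even {f : ℝ → ℝ} (heven : ∀ x, f (-x) = f x) (hf : Integrable f) :
    ∫ x in Iic 0, f x = (∫ x, f x) / 2 := by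
  have hsymm : ∫ x in Iic 0, f x = ∫ x in Ioi 0, f x := by
    simpa [heven] using integral_comp_neg_Iic 0 f
  have hsplit := intervalIntegral.integral_Iic_add_Ioi (b := 0) hf.integrableOn hf.integrableOn
  linarith

end Calculus

namespace StdGaussian

noncomputable def pdf (x : ℝ) : ℝ := (√(2 * π))⁻¹ * exp (-x ^ 2 / 2)

noncomputable def cdf (x : ℝ) : ℝ := ∫ t in Iic x, pdf t

theorem pdf_eq_gaussianPDFReal : pdf = gaussianPDFReal 0 1 := by
  ext x
  simp [pdf, gaussianPDFReal]

theorem pdf_pos (x : ℝ) : 0 < pdf x := by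
  rw [pdf_eq_gaussianPDFReal]
  exact gaussianPDFReal_pos 0 1 x one_ne_zero

theorem integral_pdf : ∫ x, pdf x = 1 := by
  rw [pdf_eq_gaussianPDFReal]
  exact integral_gaussianPDFReal_eq_one 0 one_ne_zero

theorem pdf_neg (x : ℝ) : pdf (-x) = pdf x := by
  simp [pdf]

theorem continuous_pdf : Continuous pdf := by
  unfold pdf
  fun_prop

theorem hasDerivAt_pdf (x : ℝ) : HasDerivAt pdf (-x * pdf x) x := by
  have hexponent : HasDerivAt (fun y : ℝ => -y ^ 2 / 2) (-x) x :=
    ((hasDerivAt_pow 2 x).fun_neg.div_const 2).congr_deriv (by ring)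
  exact (hexponent.exp.const_mul (√(2 * π))⁻¹).congr_deriv (by rw [pdf]; ring)

theorem integrable_pow_mul_pdf (n : ℕ) : Integrable fun t => t ^ n * pdf t := by
  have h := (integrable_rpow_mul_exp_neg_mul_sq (b := 1 / 2) (by norm_num)
    (s := n) (by linarith [n.cast_nonneg (α := ℝ)])).const_mul (√(2 * π))⁻¹
  refine h.congr (ae_of_all _ fun t => ?_)
  simp only [rpow_natCast, pdf]
  ring_nf

theorem integrable_pdf : Integrable pdf := by
  simpa using integrable_pow_mul_pdf 0

theorem integrable_mul_pdf : Integrable fun t => t * pdf t := by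
  simpa using integrable_pow_mul_pdf 1

theorem integral_Iic_mul_pdf (x : ℝ) : ∫ t in Iic x, t * pdf t = -pdf x := by
  refine integral_Iic_of_hasDerivAt_of_integrable (fun t => ?_) integrable_pdf.neg
    integrable_mul_pdf x
  exact (hasDerivAt_pdf t).neg.congr_deriv (by ring)

theorem integral_Iic_sq_mul_pdf (x : ℝ) : ∫ t in Iic x, t ^ 2 * pdf t = cdf x - x * pdf x := by
  have hderiv (t : ℝ) : HasDerivAt (fun t => -(t * pdf t)) (t ^ 2 * pdf t - pdf t) t :=
    ((hasDerivAt_id' t).mul (hasDerivAt_pdf t)).neg.congr_deriv (by ring)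
  have h := integral_Iic_of_hasDerivAt_of_integrable hderiv integrable_mul_pdf.neg
    ((integrable_pow_mul_pdf 2).sub integrable_pdf) x
  rw [integral_sub (integrable_pow_mul_pdf 2).integrableOn integrable_pdf.integrableOn] at h
  rw [cdf]
  linarith

theorem cdf_pos (x : ℝ) : 0 < cdf x := by
  rw [cdf, setIntegral_pos_iff_support_of_nonneg_ae
    (ae_of_all _ fun t => (pdf_pos t).le) integrable_pdf.integrableOn]
  simp [Function.support, (pdf_pos _).ne', Real.volume_Iic]

theorem hasDerivAt_cdf (x : ℝ) : HasDerivAt cdf (pdf x) x :=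
  hasDerivAt_integral_Iic integrable_pdf continuous_pdf x

theorem cdf_zero : cdf 0 = 1 / 2 := by
  rw [cdf, integral_Iic_zero_of_even pdf_neg integrable_pdf, integral_pdf]

noncomputable def revHazard (x : ℝ) : ℝ := pdf x / cdf x

theorem revHazard_pos (x : ℝ) : 0 < revHazard x :=
  div_pos (pdf_pos x) (cdf_pos x)

theorem integral_Iic_sub_mul_pdf (x : ℝ) :
    ∫ t in Iic x, (x - t) * pdf t = cdf x * (x + revHazard x) := by
  simp only [sub_mul]
  rw [integral_sub (integrable_pdf.const_mul x).integrableOn integrable_mul_pdf.integrableOn,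
    integral_const_mul, integral_Iic_mul_pdf, revHazard, mul_add,
    mul_div_cancel₀ _ (cdf_pos x).ne', cdf]
  ring

theorem integral_Iic_add_sq_mul_pdf (a x : ℝ) :
    ∫ t in Iic x, (t + a) ^ 2 * pdf t = cdf x - x * pdf x - 2 * a * pdf x + a ^ 2 * cdf x := by
  have h1 : Integrable fun t => 2 * a * (t * pdf t) := integrable_mul_pdf.const_mul _
  have h2 : Integrable fun t => a ^ 2 * pdf t := integrable_pdf.const_mul _
  have h12 : Integrable fun t => 2 * a * (t * pdf t) + a ^ 2 * pdf t := h1.add h2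
  have hexpand : (fun t => (t + a) ^ 2 * pdf t) =
      fun t => t ^ 2 * pdf t + (2 * a * (t * pdf t) + a ^ 2 * pdf t) := by
    funext t; ring
  rw [hexpand, integral_add (integrable_pow_mul_pdf 2).integrableOn h12.integrableOn,
    integral_add h1.integrableOn h2.integrableOn, integral_const_mul, integral_const_mul,
    integral_Iic_sq_mul_pdf, integral_Iic_mul_pdf, cdf]
  ring

theorem add_revHazard_nonneg (x : ℝ) : 0 ≤ x + revHazard x := by
  have h : 0 ≤ ∫ t in Iic x, (x - t) * pdf t :=
    setIntegral_nonneg measurableSet_Iic fun t ht => mul_nonneg (sub_nonneg.2 ht) (pdf_pos t).le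
  rw [integral_Iic_sub_mul_pdf] at h
  exact nonneg_of_mul_nonneg_right h (cdf_pos x)

theorem revHazard_mul_add_le_one (x : ℝ) : revHazard x * (x + revHazard x) ≤ 1 := by
  have h : 0 ≤ ∫ t in Iic x, (t + revHazard x) ^ 2 * pdf t :=
    setIntegral_nonneg measurableSet_Iic fun t _ => mul_nonneg (sq_nonneg _) (pdf_pos t).le
  have hpdf : pdf x = revHazard x * cdf x := by
    rw [revHazard, div_mul_cancel₀ _ (cdf_pos x).ne']
  rw [integral_Iic_add_sq_mul_pdf, hpdf] at h
  nlinarith [cdf_pos x]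

theorem hasDerivAt_revHazard (x : ℝ) :
    HasDerivAt revHazard (-(revHazard x * (x + revHazard x))) x := by
  refine ((hasDerivAt_pdf x).div (hasDerivAt_cdf x) (cdf_pos x).ne').congr_deriv ?_
  rw [revHazard]
  field_simp [(cdf_pos x).ne']
  ring

theorem abs_deriv_revHazard_le_one (x : ℝ) : |deriv revHazard x| ≤ 1 := by
  rw [(hasDerivAt_revHazard x).deriv, abs_neg,
    abs_of_nonneg (mul_nonneg (revHazard_pos x).le (add_revHazard_nonneg x))]
  exact revHazard_mul_add_le_one x

theorem lipschitzWith_revHazard : LipschitzWith 1 revHazard :=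
  lipschitzWith_of_nnnorm_deriv_le (fun x => (hasDerivAt_revHazard x).differentiableAt)
    fun x => by
      rw [← NNReal.coe_le_coe, coe_nnnorm, Real.norm_eq_abs]
      exact abs_deriv_revHazard_le_one x

theorem revHazard_zero : revHazard 0 = √(2 / π) := by
  have hsqrt : √(2 / π) = 2 / √(2 * π) := by
    rw [show 2 / π = 2 ^ 2 / (2 * π) by field_simp, sqrt_div' _ (by positivity),
      sqrt_sq zero_le_two]
  rw [revHazard, cdf_zero, pdf, hsqrt]
  norm_num
  field_simp

theorem revHazard_le (x : ℝ) : revHazard x ≤ √(2 / π) + |x| := by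
  have h := lipschitzWith_revHazard.dist_le_mul x 0
  rw [revHazard_zero, Real.dist_eq, Real.dist_eq, sub_zero, NNReal.coe_one, one_mul] at h
  linarith [le_abs_self (revHazard x - √(2 / π))]

end StdGaussian

/-- The Gaussian hazard-type ratio `φ₁/Φ₁` (density over distribution
function of the standard normal) has derivative bounded by `1` in absolute value, and
consequently `φ₁(x)/Φ₁(x) ≤ √(2/π) + |x|` for all `x`. -/
theorem gaussian_ratio_deriv_bound :
    let φ₁ : ℝ → ℝ := fun x => (Real.sqrt (2 * Real.pi))⁻¹ * Real.exp (-x ^ 2 / 2)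
    let Φ₁ : ℝ → ℝ := fun x => ∫ t in Set.Iic x, φ₁ t
    (∀ x : ℝ, |deriv (fun y => φ₁ y / Φ₁ y) x| ≤ 1) ∧
      ∀ x : ℝ, φ₁ x / Φ₁ x ≤ Real.sqrt (2 / Real.pi) + |x| :=
  ⟨StdGaussian.abs_deriv_revHazard_le_one, StdGaussian.revHazard_le⟩
end

section
/- Assume: Z and N are independent standard Gaussian random variables; f : ℝ → ℝ is Borel measurable; f(Z) is not independent of Z; the limit D := lim_{v→0⁺} mmse_z(v)/v exists; and λ is a random variable with a ≤ λ ≤ b almost surely (0 < a ≤ b < ∞) and E[λ] = δ > 1. If P(v) > 0 for every v ∈ (0, 1] (the perfect-reconstruction condition of the state evolution), then D < 1 and δ ≥ 1/(1 − D); that is, the sampling ratio must be at least the information-theoretic threshold 1/(1 − D). -/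
/-!
Comparing with the linear estimator `s / (1 + s²) · (s Z + N)` of `Z`, whose error is
`1 / (1 + s²) = v` for `s = √(1/v - 1)`, gives `mmse v ≤ v`. As `λ ≥ a`, the integral in `P v`
is at most `φ v / (φ v + a)`, and `P v > 0` rearranges to `a < δ (mmse v + a (1 - mmse v / v))`.
Letting `v → 0⁺`, where `mmse v → 0` and `mmse v / v → D`, yields `1 ≤ δ (1 - D)`.
-/

open MeasureTheory ProbabilityTheory Filter

section ConditionalExpectation

variable {Ω : Type*} {m m₀ : MeasurableSpace Ω} {μ : Measure[m₀] Ω} [IsFiniteMeasure μ]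

theorem integral_sq_sub_condExp_le_integral_sq_sub (hm : m ≤ m₀) {X W : Ω → ℝ}
    (hX : MemLp X 2 μ) (hW : MemLp W 2 μ) (hWm : StronglyMeasurable[m] W) :
    ∫ ω, (X ω - μ[X | m] ω) ^ 2 ∂μ ≤ ∫ ω, (X ω - W ω) ^ 2 ∂μ := by
  -- the error is the integrated conditional variance of `Y = X - W`, which is at most `∫ Y²`
  set Y := X - W
  have hY : MemLp Y 2 μ := hX.sub hW
  have hcond : μ[Y | m] =ᵐ[μ] μ[X | m] - W := by
    filter_upwards [condExp_sub (hX.integrable one_le_two) (hW.integrable one_le_two) m]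
      with ω hω
    rw [hω, Pi.sub_apply, Pi.sub_apply,
      condExp_of_stronglyMeasurable hm hWm (hW.integrable one_le_two)]
  calc ∫ ω, (X ω - μ[X | m] ω) ^ 2 ∂μ
      = ∫ ω, Var[Y; μ | m] ω ∂μ := by
        rw [condVar, integral_condExp hm]
        refine integral_congr_ae ?_
        filter_upwards [hcond] with ω hω
        simp only [Pi.pow_apply, Pi.sub_apply, hω, Y]
        ring
    _ ≤ ∫ ω, μ[Y ^ 2 | m] ω ∂μ :=
        integral_mono_ae integrable_condVar integrable_condExp (condVar_ae_le_condExp_sq hm hY)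
    _ = ∫ ω, (X ω - W ω) ^ 2 ∂μ := integral_condExp hm

end ConditionalExpectation

section Gaussian

variable {Ω : Type*} [MeasurableSpace Ω] {μ : Measure Ω} {Z : Ω → ℝ} {m : ℝ} {v : NNReal}

theorem ProbabilityTheory.HasLaw.memLp_two_of_gaussianReal (hZ : HasLaw Z (gaussianReal m v) μ) :
    MemLp Z 2 μ :=
  (memLp_map_measure_iff aestronglyMeasurable_id hZ.aemeasurable).mp
    (hZ.map_eq ▸ memLp_id_gaussianReal 2)

theorem ProbabilityTheory.HasLaw.integral_sq_of_gaussianReal [IsProbabilityMeasure μ]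
    (hZ : HasLaw Z (gaussianReal m v) μ) :
    ∫ ω, Z ω ^ 2 ∂μ = v + m ^ 2 := by
  have h := variance_eq_sub hZ.memLp_two_of_gaussianReal
  rw [hZ.variance_eq, variance_id_gaussianReal, hZ.integral_eq, integral_id_gaussianReal] at h
  simp only [Pi.pow_apply] at h
  linarith

end Gaussian

section LinearEstimator

variable {Ω : Type*} [MeasurableSpace Ω] {μ : Measure Ω} {Z N : Ω → ℝ}

theorem integral_sq_sub_linearEstimator (hZ : MemLp Z 2 μ) (hN : MemLp N 2 μ)
    (hZ2 : ∫ ω, Z ω ^ 2 ∂μ = 1) (hN2 : ∫ ω, N ω ^ 2 ∂μ = 1) (hZN : ∫ ω, Z ω * N ω ∂μ = 0)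
    (s : ℝ) :
    ∫ ω, (Z ω - s / (1 + s ^ 2) * (s * Z ω + N ω)) ^ 2 ∂μ = 1 / (1 + s ^ 2) := by
  set c := s / (1 + s ^ 2)
  have hZZ : Integrable (fun ω => (1 - c * s) ^ 2 * Z ω ^ 2) μ := hZ.integrable_sq.const_mul _
  have hNN : Integrable (fun ω => c ^ 2 * N ω ^ 2) μ := hN.integrable_sq.const_mul _
  have hZN' : Integrable (fun ω => 2 * c * (1 - c * s) * (Z ω * N ω)) μ :=
    (hZ.integrable_mul hN).const_mul _
  have hexpand : ∀ ω, (Z ω - c * (s * Z ω + N ω)) ^ 2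
      = (1 - c * s) ^ 2 * Z ω ^ 2 + (c ^ 2 * N ω ^ 2 - 2 * c * (1 - c * s) * (Z ω * N ω)) :=
    fun ω => by ring
  simp_rw [hexpand]
  rw [integral_add hZZ (by exact hNN.sub hZN'), integral_sub hNN hZN', integral_const_mul,
    integral_const_mul, integral_const_mul, hZ2, hN2, hZN]
  have : 0 < 1 + s ^ 2 := by positivity
  simp only [c]
  field_simp
  ring

end LinearEstimator

section GaussianChannel

variable {Ω : Type*} {m m₀ : MeasurableSpace Ω} {μ : Measure[m₀] Ω} [IsProbabilityMeasure μ]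
  {Z N : Ω → ℝ}

theorem integral_sq_sub_condExp_le_of_measurable_gaussianChannel
    (hZ : HasLaw Z (gaussianReal 0 1) μ) (hN : HasLaw N (gaussianReal 0 1) μ)
    (hZN : IndepFun Z N μ) (hm : m ≤ m₀) {s : ℝ} (hobs : Measurable[m] fun ω => s * Z ω + N ω) :
    ∫ ω, (Z ω - μ[Z | m] ω) ^ 2 ∂μ ≤ 1 / (1 + s ^ 2) := by
  have hZ2 := hZ.memLp_two_of_gaussianReal
  have hN2 := hN.memLp_two_of_gaussianReal
  have hZN0 : ∫ ω, Z ω * N ω ∂μ = 0 := by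
    rw [hZN.integral_fun_mul_eq_mul_integral hZ2.1 hN2.1, hZ.integral_eq, integral_id_gaussianReal,
      zero_mul]
  have hsq : ∀ {X : Ω → ℝ}, HasLaw X (gaussianReal 0 1) μ → ∫ ω, X ω ^ 2 ∂μ = 1 := fun hX => by
    simp [hX.integral_sq_of_gaussianReal]
  calc ∫ ω, (Z ω - μ[Z | m] ω) ^ 2 ∂μ
      ≤ ∫ ω, (Z ω - s / (1 + s ^ 2) * (s * Z ω + N ω)) ^ 2 ∂μ :=
        integral_sq_sub_condExp_le_integral_sq_sub hm hZ2
          (((hZ2.const_mul s).add hN2).const_mul _) (hobs.const_mul _).stronglyMeasurable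
    _ = 1 / (1 + s ^ 2) := integral_sq_sub_linearEstimator hZ2 hN2 (hsq hZ) (hsq hN) hZN0 s

end GaussianChannel

theorem one_div_one_add_sqrt_one_div_sub_one_sq {v : ℝ} (hv : v ∈ Set.Ioc 0 1) :
    1 / (1 + Real.sqrt (1 / v - 1) ^ 2) = v := by
  rw [Real.sq_sqrt (by rw [sub_nonneg, le_div_iff₀ hv.1, one_mul]; exact hv.2), add_sub_cancel,
    one_div_one_div]

theorem integral_div_add_le_div_add {Ω : Type*} [MeasurableSpace Ω] {μ : Measure Ω}
    [IsProbabilityMeasure μ] {lam : Ω → ℝ} {a c : ℝ} (hc : 0 ≤ c) (ha : 0 < a)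
    (hlam : ∀ᵐ ω ∂μ, a ≤ lam ω) :
    ∫ ω, c / (c + lam ω) ∂μ ≤ c / (c + a) := by
  have hle : ∀ᵐ ω ∂μ, c / (c + lam ω) ≤ c / (c + a) := by
    filter_upwards [hlam] with ω hω
    gcongr
  have hnonneg : ∀ᵐ ω ∂μ, 0 ≤ c / (c + lam ω) := by
    filter_upwards [hlam] with ω hω
    exact div_nonneg hc (by linarith)
  simpa using integral_mono_of_nonneg hnonneg (integrable_const _) hle

theorem lt_mul_of_one_sub_lt_div_add {a δ mse v : ℝ} (ha : 0 < a) (hv : 0 < v) (hmse : 0 ≤ mse)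
    (hmse_le : mse ≤ v)
    (h : 1 - δ * (1 - mse / v) < mse * v / (v - mse) / (mse * v / (v - mse) + a)) :
    a < δ * (mse + a * (1 - mse / v)) := by
  -- if `mse = v` the junk value `x / 0 = 0` makes the right-hand side of `h` vanish
  rcases hmse_le.eq_or_lt with heq | hlt
  · subst heq
    simp [div_self hv.ne'] at h
    linarith
  set φ := mse * v / (v - mse)
  have hφ : 0 ≤ φ := div_nonneg (by positivity) (sub_pos.mpr hlt).le
  have hφr : φ * (1 - mse / v) = mse := by
    simp only [φ]
    field_simp [(sub_pos.mpr hlt).ne']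
  rw [lt_div_iff₀ (by linarith)] at h
  linear_combination h + δ * hφr

theorem tendsto_nhdsGT_zero_of_tendsto_div {h : ℝ → ℝ} {D : ℝ}
    (hD : Tendsto (fun v => h v / v) (nhdsWithin 0 (Set.Ioi 0)) (nhds D)) :
    Tendsto h (nhdsWithin 0 (Set.Ioi 0)) (nhds 0) := by
  have hmul := (tendsto_nhdsWithin_of_tendsto_nhds tendsto_id).mul hD
  rw [zero_mul] at hmul
  refine hmul.congr' ?_
  filter_upwards [self_mem_nhdsWithin] with v (hv : 0 < v)
  exact mul_div_cancel₀ (h v) hv.ne'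

theorem state_evolution_necessity_general {Ω : Type*} [MeasurableSpace Ω] {μ : Measure Ω}
    [IsProbabilityMeasure μ]
    (Z N : Ω → ℝ) (f : ℝ → ℝ)
    (hZ : Measurable Z) (hN : Measurable N) (hf : Measurable f)
    (hZg : μ.map Z = gaussianReal 0 1) (hNg : μ.map N = gaussianReal 0 1)
    (hZN : IndepFun Z N μ)
    (lam : Ω → ℝ)
    (a b δ D : ℝ) (ha : 0 < a)
    (hbound : ∀ᵐ ω ∂μ, lam ω ∈ Set.Icc a b)
    (hδ : 1 < δ) :
    let mmse : ℝ → ℝ := fun v =>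
      ∫ ω, (Z ω - (μ[Z | MeasurableSpace.comap
          (fun ω => (Real.sqrt (1 / v - 1) * Z ω + N ω, f (Z ω))) inferInstance]) ω) ^ 2 ∂μ
    let φ : ℝ → ℝ := fun v => mmse v * v / (v - mmse v)
    let g : ℝ → ℝ := fun v => 1 - δ * (1 - mmse v / v)
    let P : ℝ → ℝ := fun v => (∫ ω, φ v / (φ v + lam ω) ∂μ) - g v
    (¬ IndepFun Z (fun ω => f (Z ω)) μ) →
    Tendsto (fun v => mmse v / v) (nhdsWithin 0 (Set.Ioi 0)) (nhds D) →
    (∀ v ∈ Set.Ioc (0 : ℝ) 1, 0 < P v) →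
    D < 1 ∧ 1 / (1 - D) ≤ δ := by
  intro mmse φ g P _ hlim hP
  have hmmse_le : ∀ v ∈ Set.Ioc (0 : ℝ) 1, mmse v ≤ v := fun v hv => by
    have hobs := (hZ.const_mul (Real.sqrt (1 / v - 1))).add hN |>.prodMk (hf.comp hZ)
    refine (integral_sq_sub_condExp_le_of_measurable_gaussianChannel ⟨hZ.aemeasurable, hZg⟩
      ⟨hN.aemeasurable, hNg⟩ hZN hobs.comap_le ?_).trans_eq
      (one_div_one_add_sqrt_one_div_sub_one_sq hv)
    exact measurable_fst.comp (Measurable.of_comap_le le_rfl)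
  have hkey : ∀ v ∈ Set.Ioc (0 : ℝ) 1, a < δ * (mmse v + a * (1 - mmse v / v)) := fun v hv => by
    have hmmse_nonneg : 0 ≤ mmse v := integral_nonneg fun _ => sq_nonneg _
    refine lt_mul_of_one_sub_lt_div_add ha hv.1 hmmse_nonneg (hmmse_le v hv) ?_
    have hφ : 0 ≤ φ v :=
      div_nonneg (mul_nonneg hmmse_nonneg hv.1.le) (sub_nonneg.mpr (hmmse_le v hv))
    linarith [hP v hv, integral_div_add_le_div_add hφ ha (hbound.mono fun _ h => h.1)]
  have hlimit : Tendsto (fun v => δ * (mmse v + a * (1 - mmse v / v)))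
      (nhdsWithin 0 (Set.Ioi 0)) (nhds (δ * (0 + a * (1 - D)))) :=
    ((tendsto_nhdsGT_zero_of_tendsto_div hlim).add
      ((tendsto_const_nhds.sub hlim).const_mul a)).const_mul δ
  have hthreshold : a ≤ δ * (0 + a * (1 - D)) :=
    ge_of_tendsto hlimit (eventually_of_mem (Ioc_mem_nhdsGT one_pos) fun v hv => (hkey v hv).le)
  have hδD : 1 ≤ δ * (1 - D) := by nlinarith
  have hD : D < 1 := by nlinarith
  exact ⟨hD, by rw [div_le_iff₀ (sub_pos.mpr hD)]; linarith⟩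

/-- Necessity of the information-theoretic threshold.  Under the standing
assumptions, if the perfect-reconstruction condition `P(v) > 0` for all `v ∈ (0,1]` of the
state evolution holds, then the conditional MMSE dimension satisfies `D < 1` and the
sampling ratio satisfies `δ ≥ 1/(1 − D)`. -/
theorem state_evolution_necessity {Ω : Type*} [MeasurableSpace Ω] {μ : Measure Ω}
    [IsProbabilityMeasure μ]
    (Z N : Ω → ℝ) (f : ℝ → ℝ)
    (hZ : Measurable Z) (hN : Measurable N) (hf : Measurable f)
    (hZg : μ.map Z = gaussianReal 0 1) (hNg : μ.map N = gaussianReal 0 1)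
    (hZN : IndepFun Z N μ)
    (lam : Ω → ℝ) (hlam : Measurable lam)
    (a b δ D : ℝ) (ha : 0 < a) (hab : a ≤ b)
    (hbound : ∀ᵐ ω ∂μ, lam ω ∈ Set.Icc a b)
    (hmean : ∫ ω, lam ω ∂μ = δ) (hδ : 1 < δ) :
    let mmse : ℝ → ℝ := fun v =>
      ∫ ω, (Z ω - (μ[Z | MeasurableSpace.comap
          (fun ω => (Real.sqrt (1 / v - 1) * Z ω + N ω, f (Z ω))) inferInstance]) ω) ^ 2 ∂μ
    let φ : ℝ → ℝ := fun v => mmse v * v / (v - mmse v)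
    let g : ℝ → ℝ := fun v => 1 - δ * (1 - mmse v / v)
    let P : ℝ → ℝ := fun v => (∫ ω, φ v / (φ v + lam ω) ∂μ) - g v
    (¬ IndepFun Z (fun ω => f (Z ω)) μ) →
    Tendsto (fun v => mmse v / v) (nhdsWithin 0 (Set.Ioi 0)) (nhds D) →
    (∀ v ∈ Set.Ioc (0 : ℝ) 1, 0 < P v) →
    D < 1 ∧ 1 / (1 - D) ≤ δ :=
  state_evolution_necessity_general Z N f hZ hN hf hZg hNg hZN lam a b δ D ha hbound hδ
end

section
/- Assume: Z and N are independent standard Gaussian random variables; f : ℝ → ℝ is Borel measurable; f(Z) is not independent of Z; the limit D := lim_{v→0⁺} mmse_z(v)/v exists. Let Λ₁ and Λ₂ be random variables with a ≤ Λ_i ≤ b almost surely (0 < a ≤ b < ∞), E[Λ₁] = E[Λ₂] = 1, and suppose Λ₁ is spikier than Λ₂ in the Lorenz sense: E[h(Λ₂)] ≤ E[h(Λ₁)] for every continuous convex function h : [0, ∞) → ℝ. For δ > 1 and i ∈ {1, 2}, define P_{i,δ}(v) := E[φ(v)/(φ(v) + δ·Λ_i)] − g_δ(v), where g_δ(v)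 := 1 − δ·(1 − mmse_z(v)/v), and define the perfect-reconstruction threshold δ^p_i := inf{δ > 1 : P_{i,δ}(v) > 0 for all v ∈ (0, 1]}. Then δ^p_1 ≤ δ^p_2: a spikier spectrum never increases the number of measurements needed for perfect reconstruction. -/
/-!
Every `δ` admissible for `Λ₂` is admissible for `Λ₁`, so the infimum over the larger set is
smaller. Since a linear estimator already has mean square error `v`, `mmse_z(v) ≤ v`, hence
`φ(v) ≥ 0`; then `x ↦ φ(v) / (φ(v) + δ x)` is continuous and convex on `[0, ∞)`, and the
Lorenz order gives `E[φ/(φ + δΛ₂)] ≤ E[φ/(φ + δΛ₁)]`, i.e. `P_{2,δ} ≤ P_{1,δ}`.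
-/

open MeasureTheory ProbabilityTheory Filter
open scoped NNReal ENNReal

section Gaussian

variable {Ω : Type*} [MeasurableSpace Ω] {μ : Measure Ω}

lemma memLp_of_hasLaw_gaussianReal {X : Ω → ℝ} {m : ℝ} {v : ℝ≥0}
    (hX : HasLaw X (gaussianReal m v) μ) {p : ℝ≥0∞} (hp : p ≠ ∞) : MemLp X p μ :=
  (memLp_map_measure_iff aestronglyMeasurable_id hX.aemeasurable).mp
    (hX.map_eq ▸ memLp_id_gaussianReal' p hp)

variable [IsProbabilityMeasure μ]

lemma integral_sq_add_of_hasLaw_gaussianReal {Z N : Ω → ℝ}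
    (hZ : HasLaw Z (gaussianReal 0 1) μ) (hN : HasLaw N (gaussianReal 0 1) μ)
    (hZN : IndepFun Z N μ) (α β : ℝ) :
    ∫ ω, (α * Z ω + β * N ω) ^ 2 ∂μ = α ^ 2 + β ^ 2 := by
  have hZ2 : MemLp Z 2 μ := memLp_of_hasLaw_gaussianReal hZ (by simp)
  have hN2 : MemLp N 2 μ := memLp_of_hasLaw_gaussianReal hN (by simp)
  have hmean : μ[fun ω => α * Z ω + β * N ω] = 0 := by
    rw [integral_add ((hZ2.integrable one_le_two).const_mul α)
      ((hN2.integrable one_le_two).const_mul β), integral_const_mul, integral_const_mul,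
      hZ.integral_eq, hN.integral_eq, integral_id_gaussianReal]
    ring
  rw [← variance_of_integral_eq_zero (by fun_prop) hmean,
    IndepFun.variance_fun_add (hZ2.const_mul α) (hN2.const_mul β)
      (hZN.comp (measurable_const_mul α) (measurable_const_mul β)),
    variance_const_mul, variance_const_mul, hZ.variance_eq, hN.variance_eq,
    variance_id_gaussianReal]
  simp

end Gaussian

section ConditionalExpectation

variable {Ω : Type*} {m mΩ : MeasurableSpace Ω} {μ : Measure Ω} [IsFiniteMeasure μ]

lemma integral_mul_sub_condExp_eq_zero (hm : m ≤ mΩ) {X W : Ω → ℝ} (hX : MemLp X 2 μ)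
    (hW : MemLp W 2 μ) (hWm : AEStronglyMeasurable[m] W μ) :
    ∫ ω, W ω * (X ω - μ[X|m] ω) ∂μ = 0 := by
  have hWX : Integrable (fun ω => W ω * X ω) μ := hW.integrable_mul hX
  have hWY : Integrable (fun ω => W ω * μ[X|m] ω) μ :=
    hW.integrable_mul (hX.condExp one_le_two)
  have hpull : ∫ ω, W ω * X ω ∂μ = ∫ ω, W ω * μ[X|m] ω ∂μ :=
    calc ∫ ω, W ω * X ω ∂μ = ∫ ω, μ[W * X|m] ω ∂μ := (integral_condExp hm).symm
      _ = ∫ ω, W ω * μ[X|m] ω ∂μ :=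
        integral_congr_ae (condExp_mul_of_aestronglyMeasurable_left hWm hWX
          (hX.integrable one_le_two))
  simp only [mul_sub]
  rw [integral_sub hWX hWY, hpull, sub_self]

lemma integral_sq_sub_condExp_le (hm : m ≤ mΩ) {X g : Ω → ℝ} (hX : MemLp X 2 μ)
    (hg : MemLp g 2 μ) (hgm : AEStronglyMeasurable[m] g μ) :
    ∫ ω, (X ω - μ[X|m] ω) ^ 2 ∂μ ≤ ∫ ω, (X ω - g ω) ^ 2 ∂μ := by
  set Y := μ[X|m]
  have hY : MemLp Y 2 μ := hX.condExp one_le_two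
  have hW : MemLp (Y - g) 2 μ := hY.sub hg
  have horth : ∫ ω, (Y - g) ω * (X ω - Y ω) ∂μ = 0 :=
    integral_mul_sub_condExp_eq_zero hm hX hW
      (stronglyMeasurable_condExp.aestronglyMeasurable.sub hgm)
  have hE : Integrable (fun ω => (X ω - Y ω) ^ 2) μ := (hX.sub hY).integrable_sq
  have hcross : Integrable (fun ω => 2 * ((Y - g) ω * (X ω - Y ω))) μ :=
    (hW.integrable_mul (hX.sub hY)).const_mul 2
  have hD : Integrable (fun ω => (Y - g) ω ^ 2) μ := hW.integrable_sq
  have hcD : Integrable (fun ω => 2 * ((Y - g) ω * (X ω - Y ω)) + (Y - g) ω ^ 2) μ :=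
    hcross.add hD
  have hD0 : 0 ≤ ∫ ω, (Y - g) ω ^ 2 ∂μ := integral_nonneg fun ω => sq_nonneg _
  calc ∫ ω, (X ω - Y ω) ^ 2 ∂μ
      ≤ ∫ ω, (X ω - Y ω) ^ 2 ∂μ + (2 * ∫ ω, (Y - g) ω * (X ω - Y ω) ∂μ
          + ∫ ω, (Y - g) ω ^ 2 ∂μ) := by
        rw [horth]; linarith
    _ = ∫ ω, (X ω - g ω) ^ 2 ∂μ := by
        rw [← integral_const_mul, ← integral_add hcross hD, ← integral_add hE hcD]
        congr 1; funext ω; simp only [Pi.sub_apply]; ring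

end ConditionalExpectation

section Mmse

variable {Ω : Type*} [MeasurableSpace Ω]

noncomputable def mmse (μ : Measure Ω) (Z N : Ω → ℝ) (f : ℝ → ℝ) (v : ℝ) : ℝ :=
  ∫ ω, (Z ω - (μ[Z | MeasurableSpace.comap
      (fun ω => (Real.sqrt (1 / v - 1) * Z ω + N ω, f (Z ω))) inferInstance]) ω) ^ 2 ∂μ

variable {μ : Measure Ω} {Z N : Ω → ℝ} {f : ℝ → ℝ}

lemma mmse_nonneg (v : ℝ) : 0 ≤ mmse μ Z N f v :=
  integral_nonneg fun _ => sq_nonneg _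

-- The linear estimate `s v (s Z + N)`, `s = √(1/v - 1)`, has error `v Z - s v N`,
-- of mean square `v² + s² v² = v`.
lemma mmse_le_self [IsProbabilityMeasure μ] (hZ : Measurable Z) (hN : Measurable N)
    (hf : Measurable f) (hZg : μ.map Z = gaussianReal 0 1) (hNg : μ.map N = gaussianReal 0 1)
    (hZN : IndepFun Z N μ) {v : ℝ} (hv : v ∈ Set.Ioc 0 1) : mmse μ Z N f v ≤ v := by
  obtain ⟨hv0, hv1⟩ := hv
  have hZlaw : HasLaw Z (gaussianReal 0 1) μ := ⟨hZ.aemeasurable, hZg⟩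
  have hNlaw : HasLaw N (gaussianReal 0 1) μ := ⟨hN.aemeasurable, hNg⟩
  set s := Real.sqrt (1 / v - 1)
  have hs : s ^ 2 * v = 1 - v := by
    rw [Real.sq_sqrt (sub_nonneg.2 (one_le_one_div hv0 hv1))]; field_simp
  set T : Ω → ℝ × ℝ := fun ω => (s * Z ω + N ω, f (Z ω))
  have hT : Measurable T := ((measurable_const.mul hZ).add hN).prodMk (hf.comp hZ)
  have hgm : StronglyMeasurable[MeasurableSpace.comap T inferInstance]
      fun ω => s * v * (s * Z ω + N ω) :=
    ((measurable_fst.const_mul (s * v)).comp (comap_measurable T)).stronglyMeasurable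
  have hZ2 : MemLp Z 2 μ := memLp_of_hasLaw_gaussianReal hZlaw (by simp)
  have hN2 : MemLp N 2 μ := memLp_of_hasLaw_gaussianReal hNlaw (by simp)
  calc mmse μ Z N f v
      ≤ ∫ ω, (Z ω - s * v * (s * Z ω + N ω)) ^ 2 ∂μ :=
        integral_sq_sub_condExp_le hT.comap_le hZ2
          (((hZ2.const_mul s).add hN2).const_mul (s * v)) hgm.aestronglyMeasurable
    _ = ∫ ω, (v * Z ω + -(s * v) * N ω) ^ 2 ∂μ := by
        congr 1; funext ω; congr 1; linear_combination (-Z ω) * hs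
    _ = v := by
        rw [integral_sq_add_of_hasLaw_gaussianReal hZlaw hNlaw hZN]
        linear_combination v * hs

end Mmse

lemma convexOn_div_add_mul {c d : ℝ} (hc : 0 ≤ c) (hd : 0 ≤ d) :
    ConvexOn ℝ (Set.Ici 0) fun x => c / (c + d * x) := by
  rcases hc.eq_or_lt with rfl | hc
  · simpa using convexOn_const (0 : ℝ) (convex_Ici (0 : ℝ))
  let A : ℝ →ᵃ[ℝ] ℝ := AffineMap.const ℝ ℝ c + d • AffineMap.id ℝ ℝ
  have hA : ∀ x, A x = c + d * x := fun x => rfl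
  have hpos : Set.Ici 0 ⊆ A ⁻¹' Set.Ioi 0 := fun x (hx : 0 ≤ x) => by
    simp only [Set.mem_preimage, hA, Set.mem_Ioi]; positivity
  have := (((convexOn_zpow (-1)).comp_affineMap A).subset hpos (convex_Ici 0)).smul hc.le
  refine this.congr fun x _ => ?_
  simp [hA, div_eq_mul_inv]

lemma continuousOn_div_add_mul {c d : ℝ} (hc : 0 ≤ c) (hd : 0 ≤ d) :
    ContinuousOn (fun x => c / (c + d * x)) (Set.Ici 0) := by
  rcases hc.eq_or_lt with rfl | hc
  · simpa using continuousOn_const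
  exact continuousOn_const.div (by fun_prop) fun x (hx : 0 ≤ x) => by positivity

theorem spectrum_spikiness_threshold_comparison_general {Ω : Type*} [MeasurableSpace Ω]
    {μ : Measure Ω} [IsProbabilityMeasure μ]
    (Z N : Ω → ℝ) (f : ℝ → ℝ)
    (hZ : Measurable Z) (hN : Measurable N) (hf : Measurable f)
    (hZg : μ.map Z = gaussianReal 0 1) (hNg : μ.map N = gaussianReal 0 1)
    (hZN : IndepFun Z N μ)
    (Lam₁ Lam₂ : Ω → ℝ)
    (hLorenz : ∀ h : ℝ → ℝ, ContinuousOn h (Set.Ici 0) → ConvexOn ℝ (Set.Ici 0) h →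
      ∫ ω, h (Lam₂ ω) ∂μ ≤ ∫ ω, h (Lam₁ ω) ∂μ) :
    let mmse : ℝ → ℝ := fun v =>
      ∫ ω, (Z ω - (μ[Z | MeasurableSpace.comap
          (fun ω => (Real.sqrt (1 / v - 1) * Z ω + N ω, f (Z ω))) inferInstance]) ω) ^ 2 ∂μ
    let φ : ℝ → ℝ := fun v => mmse v * v / (v - mmse v)
    let S : (Ω → ℝ) → Set ℝ := fun Lam =>
      {d : ℝ | 1 < d ∧ ∀ v ∈ Set.Ioc (0 : ℝ) 1,
        1 - d * (1 - mmse v / v) < ∫ ω, φ v / (φ v + d * Lam ω) ∂μ}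
    (¬ IndepFun Z (fun ω => f (Z ω)) μ) →
    (∃ D : ℝ, Tendsto (fun v => mmse v / v) (nhdsWithin 0 (Set.Ioi 0)) (nhds D)) →
    (⨅ d ∈ S Lam₁, (d : EReal)) ≤ ⨅ d ∈ S Lam₂, (d : EReal) := by
  intro mmse φ S _ _
  refine biInf_mono fun d ⟨hd1, hPd⟩ => ⟨hd1, fun v hv => ?_⟩
  have hφ : 0 ≤ φ v :=
    div_nonneg (mul_nonneg (mmse_nonneg v) hv.1.le)
      (sub_nonneg.2 (mmse_le_self hZ hN hf hZg hNg hZN hv))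
  have hd : 0 ≤ d := zero_le_one.trans hd1.le
  exact (hPd v hv).trans_le
    (hLorenz _ (continuousOn_div_add_mul hφ hd) (convexOn_div_add_mul hφ hd))

/-- A spikier spectrum never increases the perfect-reconstruction threshold.
With normalized spectra `Λ₁, Λ₂` (mean 1, bounded, `Λ₁` spikier in the Lorenz sense), the
thresholds `δ^p_i := inf{δ > 1 : P_{i,δ}(v) > 0 ∀ v ∈ (0,1]}` (as extended reals, with
`inf ∅ = +∞`) satisfy `δ^p_1 ≤ δ^p_2`. -/
theorem spectrum_spikiness_threshold_comparison {Ω : Type*} [MeasurableSpace Ω]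
    {μ : Measure Ω} [IsProbabilityMeasure μ]
    (Z N : Ω → ℝ) (f : ℝ → ℝ)
    (hZ : Measurable Z) (hN : Measurable N) (hf : Measurable f)
    (hZg : μ.map Z = gaussianReal 0 1) (hNg : μ.map N = gaussianReal 0 1)
    (hZN : IndepFun Z N μ)
    (Lam₁ Lam₂ : Ω → ℝ) (hLam₁ : Measurable Lam₁) (hLam₂ : Measurable Lam₂)
    (a b : ℝ) (ha : 0 < a) (hab : a ≤ b)
    (hbound₁ : ∀ᵐ ω ∂μ, Lam₁ ω ∈ Set.Icc a b)
    (hbound₂ : ∀ᵐ ω ∂μ, Lam₂ ω ∈ Set.Icc a b)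
    (hmean₁ : ∫ ω, Lam₁ ω ∂μ = 1) (hmean₂ : ∫ ω, Lam₂ ω ∂μ = 1)
    (hLorenz : ∀ h : ℝ → ℝ, ContinuousOn h (Set.Ici 0) → ConvexOn ℝ (Set.Ici 0) h →
      ∫ ω, h (Lam₂ ω) ∂μ ≤ ∫ ω, h (Lam₁ ω) ∂μ) :
    let mmse : ℝ → ℝ := fun v =>
      ∫ ω, (Z ω - (μ[Z | MeasurableSpace.comap
          (fun ω => (Real.sqrt (1 / v - 1) * Z ω + N ω, f (Z ω))) inferInstance]) ω) ^ 2 ∂μ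
    let φ : ℝ → ℝ := fun v => mmse v * v / (v - mmse v)
    let S : (Ω → ℝ) → Set ℝ := fun Lam =>
      {d : ℝ | 1 < d ∧ ∀ v ∈ Set.Ioc (0 : ℝ) 1,
        1 - d * (1 - mmse v / v) < ∫ ω, φ v / (φ v + d * Lam ω) ∂μ}
    (¬ IndepFun Z (fun ω => f (Z ω)) μ) →
    (∃ D : ℝ, Tendsto (fun v => mmse v / v) (nhdsWithin 0 (Set.Ioi 0)) (nhds D)) →
    (⨅ d ∈ S Lam₁, (d : EReal)) ≤ ⨅ d ∈ S Lam₂, (d : EReal) :=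
  spectrum_spikiness_threshold_comparison_general Z N f hZ hN hf hZg hNg hZN Lam₁ Lam₂ hLorenz
end
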